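/- The three polynomials eu₀ = x·X + y·Y, q = x·y and Q = X·Y are algebraically independent over ℂ in ℂ[x,y,X,Y]; equivalently, the ℂ-algebra homomorphism ℂ[T,T',T''] → ℂ[x,y,X,Y] determined by T ↦ eu₀, T' ↦ q, T'' ↦ Q is injective. Consequently, for each i ≥ 0, Ψ_i is the unique polynomial P ∈ ℂ[T,T',T''] satisfying P(eu₀,q,Q) = Σ_{j=0}^{i} (x·X)^{i−j}·(y·Y)^{j}. -/
import Mathlib


open MvPolynomial

/-- `Ψ₀ = 1`, `Ψ₁ = T`, `Ψ_{i+2} = T·Ψ_{i+1} − T'·T''·Ψ_i`, where `T = X 0`, `T' = X 1`,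
`T'' = X 2`. -/
noncomputable def Psi : ℕ → MvPolynomial (Fin 3) ℂ
  | 0 => 1
  | 1 => X 0
  | (n + 2) => X 0 * Psi (n + 1) - X 1 * X 2 * Psi n

/-- `q = x·y`, with variables `x = X 0`, `y = X 1`, `X = X 2`, `Y = X 3`. -/
noncomputable def qP : MvPolynomial (Fin 4) ℂ := X 0 * X 1
/-- `Q = X·Y`. -/
noncomputable def QP : MvPolynomial (Fin 4) ℂ := X 2 * X 3
/-- `eu₀ = x·X + y·Y`. -/
noncomputable def euP : MvPolynomial (Fin 4) ℂ := X 0 * X 2 + X 1 * X 3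

/-- The polynomial map `(x,y,X,Y) ↦ (eu₀, q, Q)` is surjective onto `ℂ³`. -/
theorem point_surj (a b c : ℂ) : ∃ v : Fin 4 → ℂ,
    eval v euP = a ∧ eval v qP = b ∧ eval v QP = c := by
  by_cases hb : b = 0
  · exact ⟨![0, a, c, 1], by simp [euP, qP, QP, hb]⟩
  by_cases hc : c = 0
  · exact ⟨![b, 1, 0, a], by simp [euP, qP, QP, hc]⟩
  obtain ⟨s, hs⟩ := IsAlgClosed.exists_pow_nat_eq (k := ℂ) (a^2 - 4*b*c) zero_lt_two
  set t : ℂ := (a + s)/2 with ht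
  have ht2 : t^2 + b*c = a*t := by rw [ht]; linear_combination hs/4
  have htne : t ≠ 0 := by
    intro h; rw [h] at ht2; simp at ht2
    rcases ht2 with h|h <;> [exact hb h; exact hc h]
  refine ⟨![t, b/t, 1, c], ?_, ?_, ?_⟩ <;> simp [euP, qP, QP]
  · field_simp
    linear_combination ht2
  · field_simp

/-- Injectivity of `T ↦ eu₀, T' ↦ q, T'' ↦ Q`. -/
theorem aeval_inj : Function.Injective (MvPolynomial.aeval (R := ℂ) ![euP, qP, QP]) := by
  rw [injective_iff_map_eq_zero]
  intro P hP
  by_contra hne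
  have h' : ¬ ∀ x : Fin 3 → ℂ, eval x P = eval x 0 := fun h => hne (MvPolynomial.funext h)
  push_neg at h'
  obtain ⟨p, hp⟩ := h'
  obtain ⟨v, h1, h2, h3⟩ := point_surj (p 0) (p 1) (p 2)
  have key : (aeval v) ((aeval ![euP, qP, QP]) P)
      = (aeval fun i => (aeval v) (![euP, qP, QP] i)) P :=
    comp_aeval_apply (f := ![euP, qP, QP]) (aeval v) P
  have hfun : (fun i => (aeval v) (![euP, qP, QP] i)) = p := by
    funext i
    have hv : ∀ x : MvPolynomial (Fin 4) ℂ, aeval v x = eval v x := fun _ => rfl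
    fin_cases i <;> simp only [Matrix.cons_val_zero, Matrix.cons_val_one, Matrix.head_cons,
      Fin.mk_one, Matrix.cons_val_fin_one, hv] <;> [exact h1; exact h2; exact h3]
  rw [hP, hfun, map_zero] at key
  exact hp (by rw [map_zero]; exact key.symm)

theorem hba_ne : (X 1 * X 3 : MvPolynomial (Fin 4) ℂ) - X 0 * X 2 ≠ 0 := by
  intro h
  have := congrArg (eval ![0, 1, 0, 1]) h
  simp at this

theorem S_geom (i : ℕ) :
    (∑ j ∈ Finset.range (i + 1), (X 0 * X 2 : MvPolynomial (Fin 4) ℂ) ^ (i - j) * (X 1 * X 3) ^ j)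
      * ((X 1 * X 3) - (X 0 * X 2)) = (X 1 * X 3) ^ (i + 1) - (X 0 * X 2) ^ (i + 1) := by
  have := geom_sum₂_mul (X 1 * X 3 : MvPolynomial (Fin 4) ℂ) (X 0 * X 2) (i + 1)
  rw [← this]
  congr 1
  refine Finset.sum_congr rfl fun j hj => ?_
  rw [mul_comm]
  congr 2

theorem aevalPsi_mul : ∀ i : ℕ,
    (aeval ![euP, qP, QP] (Psi i)) * ((X 1 * X 3) - (X 0 * X 2))
      = (X 1 * X 3) ^ (i + 1) - (X 0 * X 2) ^ (i + 1)
  | 0 => by simp [Psi]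
  | 1 => by simp [Psi, euP]; ring
  | (n + 2) => by
    have ih1 := aevalPsi_mul (n + 1)
    have ih2 := aevalPsi_mul n
    simp only [Psi, map_sub, map_mul, aeval_X, Matrix.cons_val_zero, Matrix.cons_val_one,
      Matrix.head_cons, Matrix.cons_val_two, Matrix.tail_cons, euP, qP, QP]
    simp only [Psi, map_sub, map_mul, aeval_X, Matrix.cons_val_zero, Matrix.cons_val_one,
      Matrix.head_cons, Matrix.cons_val_two, Matrix.tail_cons, euP, qP, QP] at ih1 ih2
    linear_combination ((X 0 * X 2 : MvPolynomial (Fin 4) ℂ) + X 1 * X 3) * ih1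
      - ((X 0 * X 1) * (X 2 * X 3)) * ih2

theorem aevalPsi (i : ℕ) : aeval ![euP, qP, QP] (Psi i)
    = ∑ j ∈ Finset.range (i + 1), (X 0 * X 2 : MvPolynomial (Fin 4) ℂ) ^ (i - j) * (X 1 * X 3) ^ j :=
  mul_right_cancel₀ hba_ne ((aevalPsi_mul i).trans (S_geom i).symm)

/-- `eu₀`, `q`, `Q` are algebraically independent over `ℂ`, i.e. the algebra
homomorphism `ℂ[T,T',T''] → ℂ[x,y,X,Y]`, `T ↦ eu₀`, `T' ↦ q`, `T'' ↦ Q`, is injective;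
consequently `Ψ_i` is the unique polynomial `P` with
`P(eu₀,q,Q) = Σ_{j=0}^{i} (xX)^{i−j}·(yY)^j`. -/
theorem stmt4 :
    Function.Injective (MvPolynomial.aeval (R := ℂ) ![euP, qP, QP]) ∧
    ∀ (i : ℕ) (P : MvPolynomial (Fin 3) ℂ),
      MvPolynomial.aeval ![euP, qP, QP] P =
          ∑ j ∈ Finset.range (i + 1), (X 0 * X 2) ^ (i - j) * (X 1 * X 3) ^ j →
        P = Psi i := by
  exact ⟨aeval_inj, fun i P h => aeval_inj (h.trans (aevalPsi i).symm)⟩
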